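/- Let H be a real Hilbert space and L a bounded linear operator on H admitting an asymptotically-invariant exhausting sequence of subspaces. Then for every finite-dimensional subspace W of H and every ε > 0, there exists a finite-dimensional subspace E of H with W ⊆ E and ‖L π_E − π_E L‖ < ε. -/

import Mathlib

open scoped InnerProductSpace

/-- The orthogonal projection of a Hilbert space onto (the closure of) a subspace, viewed as a
continuous linear operator `H →L[ℝ] H`. For a closed (e.g. finite-dimensional) subspace this is
the usual orthogonal projection onto it. -/
noncomputable def orthProj {H : Type*} [NormedAddCommGroup H] [InnerProductSpace ℝ H]
    [CompleteSpace H] (V : Submodule ℝ H) : H →L[ℝ] H :=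
  V.topologicalClosure.subtypeL.comp (Submodule.orthogonalProjectionOnto V.topologicalClosure)

/-- A sequence `{V n}` of finite-dimensional subspaces of `H` is an *asymptotically-invariant
exhausting sequence* with respect to a bounded operator `L` if it is increasing, the
commutators `[L, π_{V n}]` tend to `0` in operator norm, and `π_{V n} → 1` pointwise. -/
def IsAsymptInvExhaustingSeq {H : Type*} [NormedAddCommGroup H] [InnerProductSpace ℝ H]
    [CompleteSpace H] (L : H →L[ℝ] H) (V : ℕ → Submodule ℝ H) : Prop :=
  (∀ n, FiniteDimensional ℝ (V n)) ∧ Monotone V ∧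
  Filter.Tendsto (fun n => ‖L * orthProj (V n) - orthProj (V n) * L‖) Filter.atTop (nhds 0) ∧
  (∀ x : H, Filter.Tendsto (fun n => orthProj (V n) x) Filter.atTop (nhds x))

/-!
Choose `n` so that `[L, π_{V n}]` is small and `π_{V n}` moves every vector of `W` by at most
`δ` times its norm; the second condition is eventually true because pointwise convergence of
operators is uniform on the finite-dimensional space `W`. The space `E = W ⊔ (V n ⊓ Wᗮ)`
contains `W`, and `‖π_E - π_{V n}‖ ≤ 3δ`: on `(V n)ᗮ` the projection `π_E` is small because
`π_{V n}` almost fixes `E`, and every `v ∈ V n` lies within `2δ‖v‖` of `w + (v - π_{V n} w) ∈ E`,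
where `w ∈ W` is chosen so that `π_{V n} w` is the projection of `v` onto `π_{V n} W`.
Hence `‖[L, π_E]‖ ≤ ‖[L, π_{V n}]‖ + 6δ‖L‖`.
-/

open Filter Topology RCLike

theorem norm_mul_sub_mul_le {R : Type*} [NormedRing R] (a p q : R) :
    ‖a * p - p * a‖ ≤ ‖a * q - q * a‖ + 2 * ‖a‖ * ‖p - q‖ :=
  calc ‖a * p - p * a‖ = ‖(a * q - q * a) + (a * (p - q) - (p - q) * a)‖ := by congr 1; noncomm_ring
    _ ≤ ‖a * q - q * a‖ + (‖a * (p - q)‖ + ‖(p - q) * a‖) :=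
        (norm_add_le _ _).trans (by gcongr; exact norm_sub_le _ _)
    _ ≤ ‖a * q - q * a‖ + (‖a‖ * ‖p - q‖ + ‖p - q‖ * ‖a‖) := by
        gcongr <;> exact norm_mul_le _ _
    _ = ‖a * q - q * a‖ + 2 * ‖a‖ * ‖p - q‖ := by ring

theorem ContinuousLinearMap.tendsto_of_tendsto_apply {𝕜 G F ι : Type*} [NontriviallyNormedField 𝕜]
    [CompleteSpace 𝕜] [NormedAddCommGroup G] [NormedSpace 𝕜 G] [FiniteDimensional 𝕜 G]
    [NormedAddCommGroup F] [NormedSpace 𝕜 F] {l : Filter ι} {T : ι → G →L[𝕜] F}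
    {T₀ : G →L[𝕜] F} (h : ∀ x, Tendsto (fun i => T i x) l (𝓝 (T₀ x))) : Tendsto T l (𝓝 T₀) := by
  let b := Module.finBasis 𝕜 G
  let e : (G →L[𝕜] F) ≃L[𝕜] (Fin (Module.finrank 𝕜 G) → F) :=
    (b.equivFunL.arrowCongr (ContinuousLinearEquiv.refl 𝕜 F)).trans (ContinuousLinearEquiv.piRing _)
  refine e.toHomeomorph.isInducing.tendsto_nhds_iff.2 (tendsto_pi_nhds.2 fun j => ?_)
  have hbj : b.equivFunL.symm (Pi.single j 1) = b j := Basis.equivFun_symm_single b j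
  simpa [e, ContinuousLinearEquiv.piRing, hbj] using h (b j)

section
variable {𝕜 E : Type*} [RCLike 𝕜] [NormedAddCommGroup E] [InnerProductSpace 𝕜 E]

theorem norm_le_norm_add_of_inner_eq_zero {x y : E} (h : ⟪x, y⟫_𝕜 = 0) : ‖x‖ ≤ ‖x + y‖ :=
  (mul_self_le_mul_self_iff (norm_nonneg _) (norm_nonneg _)).2 <| by
    rw [norm_add_sq_eq_norm_sq_add_norm_sq_of_inner_eq_zero x y h]
    exact le_add_of_nonneg_right (mul_self_nonneg _)

namespace Submodule

theorem norm_sub_starProjection_le {U : Submodule 𝕜 E} [U.HasOrthogonalProjection] (y : E)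
    {x : E} (hx : x ∈ U) : ‖y - U.starProjection y‖ ≤ ‖y - x‖ := by
  rw [starProjection_minimal]
  exact ciInf_le ⟨0, Set.forall_mem_range.mpr fun _ => norm_nonneg _⟩ (⟨x, hx⟩ : U)

theorem norm_sub_starProjection_apply_le {U : Submodule 𝕜 E} [U.HasOrthogonalProjection] (y : E) :
    ‖y - U.starProjection y‖ ≤ ‖y‖ := by
  simpa using norm_sub_starProjection_le y U.zero_mem

variable {U V W : Submodule 𝕜 E} [V.HasOrthogonalProjection] {δ : ℝ}

theorem norm_starProjection_apply_le_of_mem_orthogonal [U.HasOrthogonalProjection] (hδ : 0 ≤ δ)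
    (hU : ∀ u ∈ U, ‖u - V.starProjection u‖ ≤ δ * ‖u‖) {y : E} (hy : y ∈ Vᗮ) :
    ‖U.starProjection y‖ ≤ δ * ‖y‖ := by
  set r := U.starProjection y
  have hr : ‖r‖ * ‖r‖ ≤ δ * ‖y‖ * ‖r‖ :=
    calc ‖r‖ * ‖r‖ = re ⟪r, y⟫_𝕜 := by
          rw [re_inner_starProjection_eq_normSq, sq]; rfl
      _ = re ⟪r - V.starProjection r, y⟫_𝕜 := by
          rw [inner_sub_left, inner_right_of_mem_orthogonal (V.starProjection_apply_mem r) hy,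
            sub_zero]
      _ ≤ ‖r - V.starProjection r‖ * ‖y‖ := re_inner_le_norm _ _
      _ ≤ δ * ‖r‖ * ‖y‖ := by gcongr; exact hU r (U.starProjection_apply_mem y)
      _ = δ * ‖y‖ * ‖r‖ := by ring
  rcases (norm_nonneg r).eq_or_lt with h | h
  · rw [← h]; positivity
  · exact le_of_mul_le_mul_right hr h

theorem norm_sub_starProjection_le_of_mem_sup_inf_orthogonal (hδ : 0 ≤ δ)
    (hW : ∀ w ∈ W, ‖w - V.starProjection w‖ ≤ δ * ‖w‖) {e : E} (he : e ∈ W ⊔ (V ⊓ Wᗮ)) :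
    ‖e - V.starProjection e‖ ≤ δ * ‖e‖ := by
  obtain ⟨w, hw, v, ⟨hvV, hvW⟩, rfl⟩ := mem_sup.mp he
  calc ‖w + v - V.starProjection (w + v)‖ = ‖w - V.starProjection w‖ := by
        rw [map_add, starProjection_eq_self_iff.mpr hvV, add_sub_add_right_eq_sub]
    _ ≤ δ * ‖w‖ := hW w hw
    _ ≤ δ * ‖w + v‖ := by
        gcongr; exact norm_le_norm_add_of_inner_eq_zero (inner_right_of_mem_orthogonal hw hvW)

theorem norm_sub_starProjection_sup_inf_orthogonal_le [FiniteDimensional 𝕜 W]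
    [(W ⊔ (V ⊓ Wᗮ)).HasOrthogonalProjection] (hδ₀ : 0 ≤ δ) (hδ : δ ≤ 1 / 2)
    (hW : ∀ w ∈ W, ‖w - V.starProjection w‖ ≤ δ * ‖w‖) {v : E} (hv : v ∈ V) :
    ‖v - (W ⊔ (V ⊓ Wᗮ)).starProjection v‖ ≤ 2 * δ * ‖v‖ := by
  set W' := W.map (V.starProjection : E →ₗ[𝕜] E)
  set u := W'.starProjection v
  obtain ⟨w, hw, hwu⟩ := mem_map.mp (W'.starProjection_apply_mem v)
  change V.starProjection w = u at hwu
  have hvu : v - u ∈ V ⊓ Wᗮ := by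
    have hvuV : v - u ∈ V := V.sub_mem hv (hwu ▸ V.starProjection_apply_mem w)
    refine ⟨hvuV, fun w₀ hw₀ => ?_⟩
    rw [← starProjection_eq_self_iff.mpr hvuV, ← inner_starProjection_left_eq_right]
    exact inner_right_of_mem_orthogonal (mem_map_of_mem hw₀) (sub_starProjection_mem_orthogonal v)
  have hw_le : ‖w‖ ≤ 2 * ‖u‖ := by
    have h := hW w hw
    rw [hwu] at h
    linarith [norm_sub_norm_le w u, mul_le_mul_of_nonneg_right hδ (norm_nonneg w)]
  calc ‖v - (W ⊔ (V ⊓ Wᗮ)).starProjection v‖ ≤ ‖v - (w + (v - u))‖ :=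
        norm_sub_starProjection_le v (add_mem (mem_sup_left hw) (mem_sup_right hvu))
    _ = ‖w - V.starProjection w‖ := by rw [hwu, ← norm_neg]; congr 1; abel
    _ ≤ δ * ‖w‖ := hW w hw
    _ ≤ δ * (2 * ‖u‖) := by gcongr
    _ ≤ δ * (2 * ‖v‖) := by gcongr; exact W'.norm_starProjection_apply_le v
    _ = 2 * δ * ‖v‖ := by ring

theorem norm_starProjection_sup_inf_orthogonal_sub_le [FiniteDimensional 𝕜 W]
    [(W ⊔ (V ⊓ Wᗮ)).HasOrthogonalProjection] (hδ₀ : 0 ≤ δ) (hδ : δ ≤ 1 / 2)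
    (hW : ∀ w ∈ W, ‖w - V.starProjection w‖ ≤ δ * ‖w‖) :
    ‖(W ⊔ (V ⊓ Wᗮ)).starProjection - V.starProjection‖ ≤ 3 * δ := by
  set P := (W ⊔ (V ⊓ Wᗮ)).starProjection
  refine ContinuousLinearMap.opNorm_le_bound _ (by positivity) fun x => ?_
  have hsplit : P x - V.starProjection x
      = P (x - V.starProjection x) - (V.starProjection x - P (V.starProjection x)) := by
    rw [map_sub]; abel
  calc ‖P x - V.starProjection x‖
      ≤ ‖P (x - V.starProjection x)‖ + ‖V.starProjection x - P (V.starProjection x)‖ := by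
        rw [hsplit]; exact norm_sub_le _ _
    _ ≤ δ * ‖x - V.starProjection x‖ + 2 * δ * ‖V.starProjection x‖ := by
        gcongr
        · exact norm_starProjection_apply_le_of_mem_orthogonal hδ₀
            (fun _ => norm_sub_starProjection_le_of_mem_sup_inf_orthogonal hδ₀ hW)
            (sub_starProjection_mem_orthogonal x)
        · exact norm_sub_starProjection_sup_inf_orthogonal_le hδ₀ hδ hW
            (V.starProjection_apply_mem x)
    _ ≤ δ * ‖x‖ + 2 * δ * ‖x‖ := by
        gcongr
        · exact norm_sub_starProjection_apply_le x
        · exact V.norm_starProjection_apply_le x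
    _ = 3 * δ * ‖x‖ := by ring

end Submodule

end

theorem Submodule.eventually_forall_norm_sub_starProjection_le {𝕜 E ι : Type*} [RCLike 𝕜]
    [NormedAddCommGroup E] [InnerProductSpace 𝕜 E] {l : Filter ι} (V : ι → Submodule 𝕜 E)
    [∀ i, (V i).HasOrthogonalProjection]
    (hV : ∀ x, Tendsto (fun i => (V i).starProjection x) l (𝓝 x))
    (W : Submodule 𝕜 E) [FiniteDimensional 𝕜 W] {δ : ℝ} (hδ : 0 < δ) :
    ∀ᶠ i in l, ∀ w ∈ W, ‖w - (V i).starProjection w‖ ≤ δ * ‖w‖ := by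
  have hlim : Tendsto (fun i => (V i).starProjection ∘L W.subtypeL) l (𝓝 W.subtypeL) :=
    ContinuousLinearMap.tendsto_of_tendsto_apply fun w => hV w
  filter_upwards [(tendsto_iff_norm_sub_tendsto_zero.1 hlim).eventually (eventually_le_nhds hδ)]
    with i hi w hw
  rw [norm_sub_rev]
  exact (ContinuousLinearMap.le_of_opNorm_le _ hi ⟨w, hw⟩ :)

theorem orthProj_eq_starProjection {H : Type*} [NormedAddCommGroup H] [InnerProductSpace ℝ H]
    [CompleteSpace H] (V : Submodule ℝ H) [FiniteDimensional ℝ V] :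
    orthProj V = V.starProjection := by
  have hV : V.topologicalClosure = V :=
    V.closed_of_finiteDimensional.submodule_topologicalClosure_eq
  ext x
  refine (Submodule.eq_starProjection_of_mem_of_inner_eq_zero ?_ fun w hw => ?_).symm
  · exact hV.le (V.topologicalClosure.starProjection_apply_mem x)
  · exact V.topologicalClosure.starProjection_inner_eq_zero x w (V.le_topologicalClosure hw)

/-- If a bounded operator `L` on a real Hilbert space admits an
asymptotically-invariant exhausting sequence, then every finite-dimensional subspace `W` is
contained in a finite-dimensional subspace `E` with `‖L π_E − π_E L‖ < ε`. -/
theorem exists_finiteDimensional_almost_invariant_extension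
    {H : Type*} [NormedAddCommGroup H] [InnerProductSpace ℝ H] [CompleteSpace H]
    (L : H →L[ℝ] H)
    (hL : ∃ V : ℕ → Submodule ℝ H, IsAsymptInvExhaustingSeq L V) :
    ∀ W : Submodule ℝ H, FiniteDimensional ℝ W → ∀ ε > (0:ℝ),
      ∃ E : Submodule ℝ H, FiniteDimensional ℝ E ∧ W ≤ E ∧
        ‖L * orthProj E - orthProj E * L‖ < ε := by
  obtain ⟨V, hV, -, hcomm, hpt⟩ := hL
  intro W hW ε hε
  obtain ⟨δ, hδ_pos, hδ_half, hδ_small⟩ :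
      ∃ δ : ℝ, 0 < δ ∧ δ ≤ 1 / 2 ∧ 2 * ‖L‖ * (3 * δ) < ε / 2 := by
    have hlim : Tendsto (fun δ : ℝ => 2 * ‖L‖ * (3 * δ)) (𝓝 0) (𝓝 0) :=
      (by fun_prop : Continuous fun δ : ℝ => 2 * ‖L‖ * (3 * δ)).tendsto' 0 0 (by simp)
    exact ((eventually_le_nhds (by norm_num)).and
      (hlim.eventually (eventually_lt_nhds (half_pos hε)))).exists_gt
  simp only [orthProj_eq_starProjection] at hcomm hpt
  obtain ⟨n, hn_comm, hn_approx⟩ := ((hcomm.eventually (eventually_lt_nhds (half_pos hε))).and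
    (Submodule.eventually_forall_norm_sub_starProjection_le V hpt W hδ_pos)).exists
  refine ⟨W ⊔ (V n ⊓ Wᗮ), inferInstance, le_sup_left, ?_⟩
  rw [orthProj_eq_starProjection]
  calc _ ≤ ‖L * (V n).starProjection - (V n).starProjection * L‖
        + 2 * ‖L‖ * ‖(W ⊔ (V n ⊓ Wᗮ)).starProjection - (V n).starProjection‖ :=
        norm_mul_sub_mul_le _ _ _
    _ ≤ ‖L * (V n).starProjection - (V n).starProjection * L‖ + 2 * ‖L‖ * (3 * δ) := by
        gcongr
        exact Submodule.norm_starProjection_sup_inf_orthogonal_sub_le hδ_pos.le hδ_half hn_approx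
    _ < ε / 2 + ε / 2 := add_lt_add hn_comm hδ_small
    _ = ε := add_halves ε
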